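/- Under the hypotheses of the preceding theorem (replicas i = 1, …, n with Nᵢ > 0 GPUs, per-GPU throughputs T̄₁ ≥ ⋯ ≥ T̄ₙ > 0, N = ∑ᵢ Nᵢ, length-based loads Mᵢ ≥ 0 with running times tᵢ = Mᵢ/(Nᵢ·T̄ᵢ), and re-dispatched loads Mᵢ′ ≥ 0 satisfying the prefix-sum migration constraints and token conservation, with t̂ = maxᵢ Mᵢ′/(Nᵢ·T̄ᵢ)), the quantity (∑_{i=1}^{n} Nᵢ·tᵢ)/N is a lower bound on t̂, i.e., t̂ ≥ (∑_{i=1}^{n} Nᵢ·tᵢ)/N. -/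

import Mathlib

/-- Under the same hypotheses as the preceding theorem, the quantity
`(∑ i, Nᵢ * tᵢ) / N`, computable from length-based dispatching alone, is a lower
bound on the maximum running time `t̂` after re-dispatching. -/
theorem per_step_time_lower_bound
    (n : ℕ) (hn : 1 ≤ n) (N T M M' : ℕ → ℝ)
    (hN : ∀ i, i < n → 0 < N i)
    (hT : ∀ i, i < n → 0 < T i)
    (hTmono : ∀ i j, i ≤ j → j < n → T j ≤ T i)
    (hM : ∀ i, i < n → 0 ≤ M i)
    (hM' : ∀ i, i < n → 0 ≤ M' i)
    (hprefix : ∀ k, k < n →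
      ∑ j ∈ Finset.range (k + 1), M' j ≤ ∑ j ∈ Finset.range (k + 1), M j)
    (htotal : ∑ j ∈ Finset.range n, M' j = ∑ j ∈ Finset.range n, M j) :
    (Finset.range n).sup' (Finset.nonempty_range_iff.mpr (by omega))
        (fun i => M' i / (N i * T i))
      ≥ (∑ i ∈ Finset.range n, N i * (M i / (N i * T i)))
          / (∑ i ∈ Finset.range n, N i) := by
  set hne := Finset.nonempty_range_iff.mpr (show n ≠ 0 by omega)
  set that := (Finset.range n).sup' hne (fun i => M' i / (N i * T i)) with hthat
  have hNpos : 0 < ∑ i ∈ Finset.range n, N i := by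
    apply Finset.sum_pos
    · intro i hi; exact hN i (Finset.mem_range.mp hi)
    · exact hne
  rw [ge_iff_le, div_le_iff₀ hNpos]
  -- key Abel summation inequality: ∑ M/T ≤ ∑ M'/T
  have key : ∑ i ∈ Finset.range n, (T i)⁻¹ * M i ≤
      ∑ i ∈ Finset.range n, (T i)⁻¹ * M' i := by
    have habel : 0 ≤ ∑ i ∈ Finset.range n, (T i)⁻¹ * (M' i - M i) := by
      have := Finset.sum_range_by_parts (fun i => (T i)⁻¹) (fun i => M' i - M i) n
      simp only [smul_eq_mul] at this
      rw [this]
      have hGn : ∑ i ∈ Finset.range n, (M' i - M i) = 0 := by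
        rw [Finset.sum_sub_distrib, htotal, sub_self]
      rw [hGn, mul_zero, zero_sub, le_neg, neg_zero]
      apply Finset.sum_nonpos
      intro i hi
      have hi' : i < n - 1 := Finset.mem_range.mp hi
      have hi1 : i + 1 < n := by omega
      have h1 : (T i)⁻¹ ≤ (T (i + 1))⁻¹ :=
        one_div (T i) ▸ one_div (T (i+1)) ▸
          one_div_le_one_div_of_le (hT (i+1) hi1) (hTmono i (i+1) (by omega) hi1)
      have h2 : ∑ j ∈ Finset.range (i + 1), (M' j - M j) ≤ 0 := by
        rw [Finset.sum_sub_distrib, sub_nonpos]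
        exact hprefix i (by omega)
      exact mul_nonpos_of_nonneg_of_nonpos (by linarith) h2
    have := Finset.sum_sub_distrib (f := fun i => (T i)⁻¹ * M' i)
      (g := fun i => (T i)⁻¹ * M i) (s := Finset.range n)
    simp only [← mul_sub] at this
    linarith [habel, this ▸ habel]
  -- each term: N i * (M i / (N i * T i)) = M i / T i
  have hterm : ∀ i ∈ Finset.range n, N i * (M i / (N i * T i)) = (T i)⁻¹ * M i := by
    intro i hi
    have hi' := Finset.mem_range.mp hi
    have hN0 := (hN i hi').ne'
    have hT0 := (hT i hi').ne'
    field_simp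
  rw [Finset.sum_congr rfl hterm]
  -- N i * t̂ ≥ M' i / T i, sum up
  calc ∑ i ∈ Finset.range n, (T i)⁻¹ * M i
      ≤ ∑ i ∈ Finset.range n, (T i)⁻¹ * M' i := key
    _ ≤ ∑ i ∈ Finset.range n, that * N i := by
        apply Finset.sum_le_sum
        intro i hi
        have hi' := Finset.mem_range.mp hi
        have hNi := hN i hi'
        have hTi := hT i hi'
        have hle : M' i / (N i * T i) ≤ that :=
          Finset.le_sup' (fun i => M' i / (N i * T i)) hi
        have : (T i)⁻¹ * M' i = N i * (M' i / (N i * T i)) := by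
          field_simp
        rw [this]
        calc N i * (M' i / (N i * T i)) ≤ N i * that := by
              exact mul_le_mul_of_nonneg_left hle hNi.le
          _ = that * N i := mul_comm _ _
    _ = that * ∑ i ∈ Finset.range n, N i := by rw [Finset.mul_sum]
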